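/- Let n ≥ 1 and fix a unit vector v ∈ S^{n−1}. Then the map P ↦ vol_{n−1}(F(P,v)) is a real-valued valuation on 𝒫^n, i.e. vol_{n−1}(F(P∪Q,v)) + vol_{n−1}(F(P∩Q,v)) = vol_{n−1}(F(P,v)) + vol_{n−1}(F(Q,v)) for all P, Q ∈ 𝒫^n with P ∪ Q ∈ 𝒫^n. -/

import Mathlib

/-!
Write `h_K = h(K, v)` and suppose `h_P ≤ h_Q`. If `h_P < h_Q`, then `F(P ∪ Q) = F(Q)`;
moreover a segment from `x ∈ F(P)` to a point of `F(Q)` stays in the convex set `P ∪ Q` and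
lies above the level `h_P` except at `x`, so it runs in the closed set `Q` and `F(P) ⊆ Q`,
whence `F(P ∩ Q) = F(P)`. If `h_P = h_Q`, then `F(P ∪ Q) = F(P) ∪ F(Q)` is convex, hence
connected, so the closed faces `F(P)` and `F(Q)` meet; this forces `F(P ∩ Q) = F(P) ∩ F(Q)`,
and the identity is inclusion–exclusion for `μH[n-1]`, which is finite on compact subsets of
a hyperplane.
-/

open scoped Pointwise
open MeasureTheory Set

noncomputable section

abbrev Euc (n : ℕ) := EuclideanSpace ℝ (Fin n)

/-- `P` is a convex polytope in `ℝ^n`: the convex hull of a nonempty finite set. -/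
def IsPolytope (n : ℕ) (P : Set (Euc n)) : Prop :=
  ∃ S : Finset (Euc n), S.Nonempty ∧ P = convexHull ℝ (S : Set (Euc n))

/-- Support function `h(K, u)`. -/
def suppFn {n : ℕ} (K : Set (Euc n)) (u : Euc n) : ℝ :=
  sSup ((fun x => (inner ℝ x u : ℝ)) '' K)

/-- The face `F(P, v) = P ∩ {x : ⟪x, v⟫ = h(P, v)}`. -/
def face {n : ℕ} (P : Set (Euc n)) (v : Euc n) : Set (Euc n) :=
  {x | x ∈ P ∧ (inner ℝ x v : ℝ) = suppFn P v}

/-- `(n-1)`-dimensional volume ((n-1)-dimensional Hausdorff measure). -/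
def voln1 {n : ℕ} (s : Set (Euc n)) : ℝ :=
  (Measure.hausdorffMeasure ((n : ℝ) - 1) s).toReal

/-- Dimension of a convex set: the rank of its vector span (direction of its affine hull). -/
def pdim {n : ℕ} (P : Set (Euc n)) : ℕ := Module.finrank ℝ (vectorSpan ℝ P)

/-- `𝒩(P)`: unit outer normals of facets of `P`. -/
def normals (n : ℕ) (P : Set (Euc n)) : Set (Euc n) :=
  {v | ‖v‖ = 1 ∧ pdim (face P v) = n - 1}

/-- Application of a matrix to a vector of `ℝ^n`. -/
def apM {n : ℕ} (A : Matrix (Fin n) (Fin n) ℝ) (x : Euc n) : Euc n :=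
  (EuclideanSpace.equiv (Fin n) ℝ).symm (A.mulVec (EuclideanSpace.equiv (Fin n) ℝ x))

/-- Image of a set under a matrix. -/
def mapM {n : ℕ} (A : Matrix (Fin n) (Fin n) ℝ) (P : Set (Euc n)) : Set (Euc n) :=
  apM A '' P

/-- The standard basis vectors `e i`. -/
def ee (n : ℕ) (i : Fin n) : Euc n := EuclideanSpace.single i 1

/-- The standard simplex `T^n = conv{o, e₁, …, e_n}`. -/
def stdSimp (n : ℕ) : Set (Euc n) := convexHull ℝ (insert 0 (Set.range (ee n)))

/-- `h(Π_p^{±,>} P, u)^p` (for `gt = true`) resp. `h(Π_p^{±,<} P, u)^p` (for `gt = false`),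
where `pos = true` gives the `+` (positive part) version and `pos = false` the `−` version. -/
def projFn (n : ℕ) (p : ℝ) (pos gt : Bool) (P : Set (Euc n)) (u : Euc n) : ℝ :=
  ∑ᶠ v ∈ {v | v ∈ normals n P ∧ (if gt then 0 < suppFn P v else suppFn P v < 0)},
    voln1 (face P v) * |suppFn P v| ^ (1 - p) *
      (max ((if pos then (1 : ℝ) else -1) * (inner ℝ v u : ℝ)) 0) ^ p

/-- `h(Π_p^± P, u)^p`, the (p-th power of the support function of the) asymmetric
`L_p`-projection body of `P ∈ 𝒫ⁿₒ`. -/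
def pipFn (n : ℕ) (p : ℝ) (pos : Bool) (P : Set (Euc n)) (u : Euc n) : ℝ :=
  ∑ᶠ v ∈ {v | v ∈ normals n P ∧ (0 : Euc n) ∉ face P v},
    voln1 (face P v) * suppFn P v ^ (1 - p) *
      (max ((if pos then (1 : ℝ) else -1) * (inner ℝ v u : ℝ)) 0) ^ p

/-- `Δ_p^± P`, where `pos = true` gives `Δ_p^+ = h(Π_p^{+,>}·)^p − h(Π_p^{−,<}·)^p` and
`pos = false` gives `Δ_p^- = h(Π_p^{−,>}·)^p − h(Π_p^{+,<}·)^p`. -/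
def delFn (n : ℕ) (p : ℝ) (pos : Bool) (P : Set (Euc n)) (u : Euc n) : ℝ :=
  projFn n p pos true P u - projFn n p (!pos) false P u

open scoped RealInnerProductSpace

section HausdorffMeasure

variable {E : Type*} [NormedAddCommGroup E] [MeasurableSpace E] [BorelSpace E]

theorem hausdorffMeasure_lt_top_of_subset_submodule [NormedSpace ℝ E] (W : Submodule ℝ E)
    [FiniteDimensional ℝ W] {s : Set E} (hs : IsCompact s) (hsW : s ⊆ W) :
    μH[Module.finrank ℝ W] s < ⊤ := by
  have hsW' : s ⊆ range ((↑) : W → E) := by rwa [Subtype.range_coe]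
  rw [← image_preimage_eq_of_subset hsW',
    isometry_subtype_coe.hausdorffMeasure_image (Or.inl (Nat.cast_nonneg _))]
  exact ((Topology.IsInducing.subtypeVal.isCompact_preimage_iff hsW').2 hs).measure_lt_top

theorem hausdorffMeasure_lt_top_of_subset_hyperplane [InnerProductSpace ℝ E]
    [FiniteDimensional ℝ E] {v : E} (hv : v ≠ 0) {s : Set E} (hs : IsCompact s) {c : ℝ}
    (hsc : ∀ x ∈ s, ⟪x, v⟫ = c) :
    μH[(Module.finrank ℝ E : ℝ) - 1] s < ⊤ := by
  rcases s.eq_empty_or_nonempty with rfl | ⟨x₀, hx₀⟩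
  · simp
  have hdim : (Module.finrank ℝ E : ℝ) - 1 = Module.finrank ℝ (ℝ ∙ v)ᗮ := by
    have := (ℝ ∙ v).finrank_add_finrank_orthogonal
    rw [finrank_span_singleton hv] at this
    rw [← this]; push_cast; ring
  let τ := IsometryEquiv.subRight x₀
  have hτs : τ '' s ⊆ (ℝ ∙ v)ᗮ := by
    rintro _ ⟨x, hx, rfl⟩
    rw [SetLike.mem_coe, Submodule.mem_orthogonal_singleton_iff_inner_right, real_inner_comm]
    simp [τ, inner_sub_left, hsc x hx, hsc x₀ hx₀]
  rw [hdim, ← τ.isometry.hausdorffMeasure_image (Or.inl (Nat.cast_nonneg _))]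
  exact hausdorffMeasure_lt_top_of_subset_submodule _ (hs.image τ.continuous) hτs

end HausdorffMeasure

namespace IsPolytope

variable {n : ℕ} {P : Set (Euc n)}

theorem isCompact (hP : IsPolytope n P) : IsCompact P := by
  obtain ⟨S, -, rfl⟩ := hP
  exact S.finite_toSet.isCompact_convexHull (𝕜 := ℝ)

theorem nonempty (hP : IsPolytope n P) : P.Nonempty := by
  obtain ⟨S, hS, rfl⟩ := hP
  exact (Finset.coe_nonempty.2 hS).convexHull

theorem convex (hP : IsPolytope n P) : Convex ℝ P := by
  obtain ⟨S, -, rfl⟩ := hP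
  exact convex_convexHull ℝ _

end IsPolytope

section Face

variable {n : ℕ} {K L : Set (Euc n)} {v x : Euc n}

theorem bddAbove_inner_image (hK : IsCompact K) (v : Euc n) :
    BddAbove ((fun x => ⟪x, v⟫) '' K) :=
  (hK.image (continuous_id.inner continuous_const)).bddAbove

theorem inner_le_suppFn (hK : IsCompact K) (hx : x ∈ K) : ⟪x, v⟫ ≤ suppFn K v :=
  le_csSup (bddAbove_inner_image hK v) ⟨x, hx, rfl⟩

theorem face_nonempty (hK : IsCompact K) (hne : K.Nonempty) : (face K v).Nonempty := by
  obtain ⟨x, hx, hxv⟩ :=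
    (hK.image (continuous_id.inner continuous_const)).sSup_mem (hne.image fun x => ⟪x, v⟫)
  exact ⟨x, hx, hxv⟩

theorem IsCompact.face (hK : IsCompact K) : IsCompact (face K v) :=
  hK.inter_right (isClosed_eq (continuous_id.inner continuous_const) continuous_const)

theorem Convex.face (hK : Convex ℝ K) : Convex ℝ (face K v) :=
  hK.inter (convex_hyperplane ⟨fun x y => inner_add_left x y v,
    fun c x => real_inner_smul_left x v c⟩ _)

theorem suppFn_union (hK : IsCompact K) (hKne : K.Nonempty) (hL : IsCompact L)
    (hLne : L.Nonempty) : suppFn (K ∪ L) v = max (suppFn K v) (suppFn L v) := by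
  rw [suppFn, image_union, csSup_union (bddAbove_inner_image hK v) (hKne.image _)
    (bddAbove_inner_image hL v) (hLne.image _)]
  rfl

theorem face_union_of_suppFn_lt (hK : IsCompact K) (hKne : K.Nonempty) (hL : IsCompact L)
    (hLne : L.Nonempty) (h : suppFn K v < suppFn L v) : face (K ∪ L) v = face L v := by
  have hKL : suppFn (K ∪ L) v = suppFn L v := by
    rw [suppFn_union hK hKne hL hLne, max_eq_right h.le]
  ext x
  simp only [face, mem_ofPred_eq, mem_union, hKL]
  constructor
  · rintro ⟨hxK | hxL, hxv⟩
    · exact absurd hxv (inner_le_suppFn hK hxK |>.trans_lt h).ne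
    · exact ⟨hxL, hxv⟩
  · exact fun ⟨hxL, hxv⟩ => ⟨Or.inr hxL, hxv⟩

theorem face_union_of_suppFn_eq (hK : IsCompact K) (hKne : K.Nonempty) (hL : IsCompact L)
    (hLne : L.Nonempty) (h : suppFn K v = suppFn L v) :
    face (K ∪ L) v = face K v ∪ face L v := by
  have hKL : suppFn (K ∪ L) v = suppFn L v := by
    rw [suppFn_union hK hKne hL hLne, h, max_self]
  ext x
  simp only [face, mem_ofPred_eq, mem_union, hKL, h]
  tauto

theorem face_inter_of_nonempty (hK : IsCompact K) (h : (face K v ∩ L).Nonempty) :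
    face (K ∩ L) v = face K v ∩ L := by
  obtain ⟨x₀, ⟨hx₀K, hx₀v⟩, hx₀L⟩ := h
  have hKL : suppFn (K ∩ L) v = suppFn K v := by
    have hbdd := (bddAbove_inner_image hK v).mono (image_mono (inter_subset_left (t := L)))
    refine le_antisymm ?_ (hx₀v ▸ le_csSup hbdd ⟨x₀, ⟨hx₀K, hx₀L⟩, rfl⟩)
    exact csSup_le_csSup (bddAbove_inner_image hK v) ⟨_, ⟨x₀, ⟨hx₀K, hx₀L⟩, rfl⟩⟩
      (image_mono inter_subset_left)
  ext x
  simp only [face, mem_ofPred_eq, mem_inter_iff, hKL]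
  tauto

theorem face_inter_of_face_subset (hK : IsCompact K) (hKne : K.Nonempty) (h : face K v ⊆ L) :
    face (K ∩ L) v = face K v := by
  obtain ⟨x, hx⟩ := face_nonempty (v := v) hK hKne
  rw [face_inter_of_nonempty hK ⟨x, hx, h hx⟩, inter_eq_left.2 h]

theorem face_subset_of_suppFn_lt (hK : IsCompact K) (hL : IsCompact L) (hLne : L.Nonempty)
    (hKL : Convex ℝ (K ∪ L)) (h : suppFn K v < suppFn L v) : face K v ⊆ L := by
  intro x hx
  obtain ⟨y, hy⟩ := face_nonempty (v := v) hL hLne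
  have hxy : openSegment ℝ x y ⊆ L := by
    rintro _ ⟨a, b, ha, hb, hab, rfl⟩
    refine (hKL.openSegment_subset (Or.inl hx.1) (Or.inr hy.1)
      ⟨a, b, ha, hb, hab, rfl⟩).resolve_left fun hzK => ?_
    have := inner_le_suppFn (v := v) hK hzK
    rw [inner_add_left, real_inner_smul_left, real_inner_smul_left, hx.2, hy.2] at this
    obtain rfl : a = 1 - b := by linarith
    nlinarith [mul_pos hb (sub_pos.2 h)]
  exact hL.isClosed.closure_subset_iff.2 hxy
    (segment_subset_closure_openSegment (left_mem_segment ℝ x y))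

theorem face_inter_face_nonempty (hK : IsCompact K) (hKne : K.Nonempty) (hL : IsCompact L)
    (hLne : L.Nonempty) (hKL : Convex ℝ (K ∪ L)) (h : suppFn K v = suppFn L v) :
    (face K v ∩ face L v).Nonempty := by
  have hconn : IsPreconnected (face K v ∪ face L v) :=
    face_union_of_suppFn_eq hK hKne hL hLne h ▸ hKL.face.isPreconnected
  obtain ⟨x, hx⟩ := face_nonempty (v := v) hK hKne
  obtain ⟨y, hy⟩ := face_nonempty (v := v) hL hLne
  exact (isPreconnected_closed_iff.1 hconn _ _ hK.face.isClosed hL.face.isClosed subset_rfl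
    ⟨x, Or.inl hx, hx⟩ ⟨y, Or.inr hy, hy⟩).mono inter_subset_right

theorem face_inter_of_suppFn_eq (hK : IsCompact K) (hKne : K.Nonempty) (hL : IsCompact L)
    (hLne : L.Nonempty) (hKL : Convex ℝ (K ∪ L)) (h : suppFn K v = suppFn L v) :
    face (K ∩ L) v = face K v ∩ face L v := by
  rw [face_inter_of_nonempty hK
    ((face_inter_face_nonempty hK hKne hL hLne hKL h).mono (inter_subset_inter_right _
      inter_subset_left))]
  ext x
  simp only [face, mem_ofPred_eq, mem_inter_iff, ← h]
  tauto

theorem hausdorffMeasure_face_ne_top (hv : v ≠ 0) (hK : IsCompact K) :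
    μH[(n : ℝ) - 1] (face K v) ≠ ⊤ :=
  (finrank_euclideanSpace_fin (𝕜 := ℝ) ▸
    hausdorffMeasure_lt_top_of_subset_hyperplane hv hK.face fun _ hx => hx.2).ne

end Face

theorem voln1_face_union_add_inter_of_suppFn_le {n : ℕ} {v : Euc n} (hv : v ≠ 0)
    {P Q : Set (Euc n)} (hP : IsCompact P) (hPne : P.Nonempty) (hQ : IsCompact Q)
    (hQne : Q.Nonempty) (hPQ : Convex ℝ (P ∪ Q)) (hle : suppFn P v ≤ suppFn Q v) :
    voln1 (face (P ∪ Q) v) + voln1 (face (P ∩ Q) v) = voln1 (face P v) + voln1 (face Q v) := by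
  rcases hle.lt_or_eq with hlt | heq
  · rw [face_union_of_suppFn_lt hP hPne hQ hQne hlt,
      face_inter_of_face_subset hP hPne (face_subset_of_suppFn_lt hP hQ hQne hPQ hlt), add_comm]
  · rw [face_union_of_suppFn_eq hP hPne hQ hQne heq,
      face_inter_of_suppFn_eq hP hPne hQ hQne hPQ heq]
    exact measureReal_union_add_inter hQ.face.isClosed.measurableSet
      (hausdorffMeasure_face_ne_top hv hP) (hausdorffMeasure_face_ne_top hv hQ)

theorem stmt6_general (n : ℕ) (v : Euc n) (hv : ‖v‖ = 1) :
    ∀ P Q : Set (Euc n), IsPolytope n P → IsPolytope n Q → IsPolytope n (P ∪ Q) →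
      voln1 (face (P ∪ Q) v) + voln1 (face (P ∩ Q) v) =
        voln1 (face P v) + voln1 (face Q v) := by
  intro P Q hP hQ hPQ
  have hv0 : v ≠ 0 := by rintro rfl; simp at hv
  rcases le_total (suppFn P v) (suppFn Q v) with hle | hle
  · exact voln1_face_union_add_inter_of_suppFn_le hv0 hP.isCompact hP.nonempty hQ.isCompact
      hQ.nonempty hPQ.convex hle
  · rw [union_comm, inter_comm, add_comm (voln1 (face P v))]
    exact voln1_face_union_add_inter_of_suppFn_le hv0 hQ.isCompact hQ.nonempty hP.isCompact
      hP.nonempty (union_comm P Q ▸ hPQ.convex) hle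

/-- For a fixed unit vector `v`, the map `P ↦ vol_{n−1}(F(P,v))` is a
real-valued valuation on `𝒫ⁿ`. -/
theorem stmt6 (n : ℕ) (hn : 1 ≤ n) (v : Euc n) (hv : ‖v‖ = 1) :
    ∀ P Q : Set (Euc n), IsPolytope n P → IsPolytope n Q → IsPolytope n (P ∪ Q) →
      voln1 (face (P ∪ Q) v) + voln1 (face (P ∩ Q) v) =
        voln1 (face P v) + voln1 (face Q v) :=
  stmt6_general n v hv
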